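/- Let θ₀ = arccos(−1/3), k ∈ ℕ, λ₀ = (θ₀ + 2kπ)², and define f : ℝ³ → ℝ by f(θ₁,θ₂,λ) = 9cos³(√λ) − cos(√λ) − (cos θ₁ + 1)(3cos(√λ) + cos θ₂), where √λ denotes Real.sqrt λ. Then at the point P = (θ₀, 0, λ₀): f(P) = 0; all three first partial derivatives of f vanish at P; and the second partial derivatives at P are ∂²f/∂θ₁² = 0, ∂²f/∂θ₂² = 2/3, ∂²f/∂λ² = −4/λ₀, ∂²f/∂θ₁∂λ = −4/(3√λ₀), ∂²f/∂θ₁∂θ₂ = ∂²f/∂θ₂∂λ = 0. In particular the Hessian of f at P has determinant −32/(27λ₀) ≠ 0, so it is nondegenerate and indefinite and the zero set of f has a conical (Dirac) singularity at P. -/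

import Mathlib

/-!
Since `√λ₀ = θ₀ + 2kπ`, we have `cos √λ₀ = cos θ₀ = -1/3` and `sin √λ₀ = sin θ₀`, with
`sin² θ₀ = 8/9`. In `λ` the function is `p ∘ √`, where at `θ₁ = θ₀`, `θ₂ = 0` the profile is
`p s = 9 cos³ s - 3 cos s - 2/3`; as `c = -1/3` is a critical point of `9c³ - 3c`, `p'(√λ₀) = 0`
and the chain rule through `√` leaves only `∂²f/∂λ² = p''(√λ₀) / (4λ₀) = -16 / (4λ₀)`.
Every other partial derivative is a trigonometric polynomial evaluated at these values.
-/

open Real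

/-- The free dispersion function of the graphyne quantum graph,
f(θ₁,θ₂,λ) = 9cos³(√λ) − cos(√λ) − (cos θ₁ + 1)(3cos(√λ) + cos θ₂). -/
noncomputable def graphyneDispersion (θ₁ θ₂ l : ℝ) : ℝ :=
  9 * (Real.cos (Real.sqrt l)) ^ 3 - Real.cos (Real.sqrt l) -
    (Real.cos θ₁ + 1) * (3 * Real.cos (Real.sqrt l) + Real.cos θ₂)

open Filter Topology

noncomputable def dispersionProfile (θ₁ θ₂ s : ℝ) : ℝ :=
  9 * cos s ^ 3 - cos s - (cos θ₁ + 1) * (3 * cos s + cos θ₂)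

lemma graphyneDispersion_eq_comp_sqrt (θ₁ θ₂ : ℝ) :
    (fun l => graphyneDispersion θ₁ θ₂ l) = dispersionProfile θ₁ θ₂ ∘ sqrt := rfl

section CompSqrt

variable {h : ℝ → ℝ} {x : ℝ}

lemma hasDerivAt_comp_sqrt {h' : ℝ} (hx : 0 < x) (hh : HasDerivAt h h' (√x)) :
    HasDerivAt (h ∘ sqrt) (h' / (2 * √x)) x := by
  simpa [div_eq_mul_one_div h'] using hh.comp x (hasDerivAt_sqrt hx.ne')

lemma deriv_deriv_comp_sqrt (hx : 0 < x) (hh : Differentiable ℝ h)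
    (hh' : DifferentiableAt ℝ (deriv h) (√x)) :
    deriv (deriv (h ∘ sqrt)) x = (deriv (deriv h) (√x) - deriv h (√x) / √x) / (4 * x) := by
  have hev : deriv (h ∘ sqrt) =ᶠ[𝓝 x] (deriv h ∘ sqrt) / (fun y => 2 * √y) := by
    filter_upwards [eventually_gt_nhds hx] with y hy
    exact (hasDerivAt_comp_sqrt hy (hh _).hasDerivAt).deriv
  have hs : √x ≠ 0 := (sqrt_pos.2 hx).ne'
  have hquot := (hasDerivAt_comp_sqrt hx hh'.hasDerivAt).div
    ((hasDerivAt_sqrt hx.ne').const_mul 2) (mul_ne_zero two_ne_zero hs)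
  rw [hev.deriv_eq, hquot.deriv, Function.comp_apply]
  field_simp
  rw [sq_sqrt hx.le]
  ring

end CompSqrt

lemma det_fin_three_corner_center {R : Type*} [CommRing R] (a b c : R) :
    Matrix.det !![0, 0, a; 0, c, 0; a, 0, b] = -(c * a ^ 2) := by
  rw [Matrix.det_fin_three]
  simp only [Matrix.of_apply, Matrix.cons_val', Matrix.cons_val_zero, Matrix.cons_val_one,
    Matrix.cons_val, Matrix.cons_val_fin_one]
  ring

lemma cos_sqrt_sq_add_two_mul_nat_mul_pi {θ : ℝ} (hθ : 0 ≤ θ) (k : ℕ) :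
    cos √((θ + 2 * k * π) ^ 2) = cos θ := by
  rw [sqrt_sq (by positivity), ← cos_add_nat_mul_two_pi θ k]
  ring_nf

lemma sin_sqrt_sq_add_two_mul_nat_mul_pi {θ : ℝ} (hθ : 0 ≤ θ) (k : ℕ) :
    sin √((θ + 2 * k * π) ^ 2) = sin θ := by
  rw [sqrt_sq (by positivity), ← sin_add_nat_mul_two_pi θ k]
  ring_nf

section Derivatives

variable (θ₁ θ₂ : ℝ)

lemma hasDerivAt_dispersionProfile (s : ℝ) :
    HasDerivAt (dispersionProfile θ₁ θ₂) (-sin s * (27 * cos s ^ 2 - 3 * cos θ₁ - 4)) s := by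
  have hc := hasDerivAt_cos s
  exact ((((hc.pow 3).const_mul 9).sub hc).sub
    (((hc.const_mul 3).add_const (cos θ₂)).const_mul (cos θ₁ + 1))).congr_deriv (by ring)

lemma deriv_dispersionProfile :
    deriv (dispersionProfile θ₁ θ₂) = fun s => -sin s * (27 * cos s ^ 2 - 3 * cos θ₁ - 4) :=
  funext fun s => (hasDerivAt_dispersionProfile θ₁ θ₂ s).deriv

lemma hasDerivAt_deriv_dispersionProfile (s : ℝ) :
    HasDerivAt (deriv (dispersionProfile θ₁ θ₂))
      (54 * cos s * sin s ^ 2 - cos s * (27 * cos s ^ 2 - 3 * cos θ₁ - 4)) s := by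
  rw [deriv_dispersionProfile]
  have hc := (((hasDerivAt_cos s).pow 2).const_mul 27).sub_const (3 * cos θ₁)
  exact ((hasDerivAt_sin s).neg.mul (hc.sub_const 4)).congr_deriv
    (by simp only [Pi.pow_apply, Pi.neg_apply]; ring)

lemma deriv_graphyneDispersion_fst (l : ℝ) :
    deriv (fun x => graphyneDispersion x θ₂ l) = fun x => sin x * (3 * cos √l + cos θ₂) := by
  funext x
  exact HasDerivAt.deriv <| ((((hasDerivAt_cos x).add_const 1).mul_const
    (3 * cos √l + cos θ₂)).const_sub (9 * cos √l ^ 3 - cos √l)).congr_deriv (by ring)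

lemma deriv_graphyneDispersion_snd (l : ℝ) :
    deriv (fun y => graphyneDispersion θ₁ y l) = fun y => (cos θ₁ + 1) * sin y := by
  funext y
  exact HasDerivAt.deriv <| ((((hasDerivAt_cos y).const_add (3 * cos √l)).const_mul
    (cos θ₁ + 1)).const_sub (9 * cos √l ^ 3 - cos √l)).congr_deriv (by ring)

lemma hasDerivAt_deriv_graphyneDispersion_fst {l : ℝ} (hl : 0 < l) :
    HasDerivAt (fun l => deriv (fun x => graphyneDispersion x θ₂ l) θ₁)
      (-3 * sin θ₁ * sin √l / (2 * √l)) l := by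
  simp only [deriv_graphyneDispersion_fst]
  exact ((((hasDerivAt_comp_sqrt hl (hasDerivAt_cos √l)).const_mul 3).add_const
    (cos θ₂)).const_mul (sin θ₁)).congr_deriv (by ring)

end Derivatives

section DiracPoint

variable {θ₁ θ₂ s l : ℝ}

lemma deriv_dispersionProfile_eq_zero (hθ₁ : cos θ₁ = -(1 / 3)) (hs : cos s = -(1 / 3)) :
    deriv (dispersionProfile θ₁ θ₂) s = 0 := by
  simp only [deriv_dispersionProfile, hθ₁, hs]
  ring

lemma deriv_deriv_dispersionProfile (hθ₁ : cos θ₁ = -(1 / 3)) (hs : cos s = -(1 / 3)) :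
    deriv (deriv (dispersionProfile θ₁ θ₂)) s = -16 := by
  rw [(hasDerivAt_deriv_dispersionProfile θ₁ θ₂ s).deriv, sin_sq, hθ₁, hs]
  ring

lemma deriv_graphyneDispersion_thd_eq_zero (hl : 0 < l) (hθ₁ : cos θ₁ = -(1 / 3))
    (hs : cos √l = -(1 / 3)) : deriv (fun l => graphyneDispersion θ₁ θ₂ l) l = 0 := by
  rw [graphyneDispersion_eq_comp_sqrt,
    (hasDerivAt_comp_sqrt hl (hasDerivAt_dispersionProfile θ₁ θ₂ √l)).deriv,
    ← (hasDerivAt_dispersionProfile θ₁ θ₂ √l).deriv, deriv_dispersionProfile_eq_zero hθ₁ hs,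
    zero_div]

lemma deriv_deriv_graphyneDispersion_thd (hl : 0 < l) (hθ₁ : cos θ₁ = -(1 / 3))
    (hs : cos √l = -(1 / 3)) : deriv (deriv (fun l => graphyneDispersion θ₁ θ₂ l)) l = -4 / l := by
  rw [graphyneDispersion_eq_comp_sqrt,
    deriv_deriv_comp_sqrt hl (fun s => (hasDerivAt_dispersionProfile θ₁ θ₂ s).differentiableAt)
      (hasDerivAt_deriv_dispersionProfile θ₁ θ₂ √l).differentiableAt,
    deriv_deriv_dispersionProfile hθ₁ hs, deriv_dispersionProfile_eq_zero hθ₁ hs]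
  ring

end DiracPoint

/-- At P = (θ₀,0,(θ₀+2kπ)²), θ₀ = arccos(−1/3), the free dispersion function vanishes
together with its gradient; its Hessian has the stated entries and determinant
−32/(27lam0) ≠ 0, so it is nondegenerate (a stable conical Dirac singularity). -/
theorem graphyne_dirac_point_D_eq_neg_two_thirds (k : ℕ) (θ₀ lam0 : ℝ)
    (hθ₀ : θ₀ = Real.arccos (-(1/3))) (hlam0 : lam0 = (θ₀ + 2 * (k : ℝ) * π) ^ 2) :
    graphyneDispersion θ₀ 0 lam0 = 0 ∧
    deriv (fun x => graphyneDispersion x 0 lam0) θ₀ = 0 ∧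
    deriv (fun y => graphyneDispersion θ₀ y lam0) 0 = 0 ∧
    deriv (fun l => graphyneDispersion θ₀ 0 l) lam0 = 0 ∧
    deriv (deriv (fun x => graphyneDispersion x 0 lam0)) θ₀ = 0 ∧
    deriv (deriv (fun y => graphyneDispersion θ₀ y lam0)) 0 = 2/3 ∧
    deriv (deriv (fun l => graphyneDispersion θ₀ 0 l)) lam0 = -4 / lam0 ∧
    deriv (fun l => deriv (fun x => graphyneDispersion x 0 l) θ₀) lam0 =
      -4 / (3 * Real.sqrt lam0) ∧
    deriv (fun y => deriv (fun x => graphyneDispersion x y lam0) θ₀) 0 = 0 ∧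
    deriv (fun l => deriv (fun y => graphyneDispersion θ₀ y l) 0) lam0 = 0 ∧
    Matrix.det !![(0 : ℝ), 0, -4 / (3 * Real.sqrt lam0);
                  0, 2/3, 0;
                  -4 / (3 * Real.sqrt lam0), 0, -4 / lam0] = -32 / (27 * lam0) ∧
    (-32 / (27 * lam0) : ℝ) ≠ 0 := by
  have hcos : cos θ₀ = -(1 / 3) := hθ₀ ▸ cos_arccos (by norm_num) (by norm_num)
  have hθ₀_pos : 0 < θ₀ := hθ₀ ▸ arccos_pos.2 (by norm_num)
  have hsin_sq : sin θ₀ ^ 2 = 8 / 9 := by rw [sin_sq, hcos]; norm_num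
  have hlam0_pos : 0 < lam0 := hlam0 ▸ by positivity
  have hcos_sqrt : cos √lam0 = -(1 / 3) := by
    rw [hlam0, cos_sqrt_sq_add_two_mul_nat_mul_pi hθ₀_pos.le, hcos]
  have hsin_sqrt : sin √lam0 = sin θ₀ := by
    rw [hlam0, sin_sqrt_sq_add_two_mul_nat_mul_pi hθ₀_pos.le]
  refine ⟨?_, ?_, ?_, deriv_graphyneDispersion_thd_eq_zero hlam0_pos hcos hcos_sqrt, ?_, ?_,
    deriv_deriv_graphyneDispersion_thd hlam0_pos hcos hcos_sqrt, ?_, ?_, ?_, ?_, ?_⟩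
  · simp only [graphyneDispersion, hcos, hcos_sqrt, cos_zero]; norm_num
  · rw [deriv_graphyneDispersion_fst, hcos_sqrt, cos_zero]; ring
  · simp only [deriv_graphyneDispersion_snd, sin_zero, mul_zero]
  · rw [deriv_graphyneDispersion_fst, ((hasDerivAt_sin θ₀).mul_const _).deriv, hcos_sqrt,
      cos_zero]
    ring
  · rw [deriv_graphyneDispersion_snd, ((hasDerivAt_sin 0).const_mul _).deriv, hcos, cos_zero]
    norm_num
  · rw [(hasDerivAt_deriv_graphyneDispersion_fst θ₀ 0 hlam0_pos).deriv, hsin_sqrt]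
    field_simp
    rw [hsin_sq]
    ring
  · simp only [deriv_graphyneDispersion_fst]
    rw [(((hasDerivAt_cos 0).const_add _).const_mul _).deriv, sin_zero]
    ring
  · simp only [deriv_graphyneDispersion_snd, sin_zero, mul_zero, deriv_const']
  · rw [det_fin_three_corner_center, div_pow, mul_pow, sq_sqrt hlam0_pos.le]
    field_simp
    ring
  · exact div_ne_zero (by norm_num) (by positivity)
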